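/- For n ≥ 3, in a complete weighted graph with nonnegative edge weights, the maximum Hamiltonian path weight P* and the maximum Hamiltonian cycle weight C* satisfy (2/3)·C* ≤ P* ≤ C*. -/
import Mathlib

/-- The list of consecutive edges of a path given as a list of vertices. -/
def pathEdges {V : Type*} (l : List V) : List (V × V) := l.zip l.tail

/-- The total weight of a list of edges. -/
def edgesWeight {V : Type*} (w : V → V → ℝ) (E : List (V × V)) : ℝ :=
  (E.map fun p => w p.1 p.2).sum

/-- The total weight of a path given as a list of vertices. -/
def pathWeight {V : Type*} (w : V → V → ℝ) (l : List V) : ℝ :=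
  edgesWeight w (pathEdges l)

/-- The edges of a cycle given as a list of vertices (consecutive edges plus the closing edge). -/
def cycleEdges {V : Type*} (l : List V) : List (V × V) := pathEdges (l ++ l.take 1)

/-- The total weight of a cycle given as a list of vertices. -/
def cycleWeight {V : Type*} (w : V → V → ℝ) (l : List V) : ℝ :=
  edgesWeight w (cycleEdges l)

/-- A list of vertices is Hamiltonian (a listing of all vertices, each exactly once). -/
def IsHamList {V : Type*} [Fintype V] (l : List V) : Prop := l.Nodup ∧ ∀ v : V, v ∈ l

/-- A list of edges is a matching: all the endpoint vertices are pairwise distinct. -/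
def IsMatchingList {V : Type*} (E : List (V × V)) : Prop :=
  ((E.map Prod.fst) ++ (E.map Prod.snd)).Nodup


lemma pathEdges_cons_cons {V : Type*} (a x : V) (l : List V) :
    pathEdges (a :: x :: l) = (a, x) :: pathEdges (x :: l) := rfl

lemma pathEdges_append {V : Type*} :
    ∀ (l1 : List V) (h : l1 ≠ []) (x : V) (l2 : List V),
    pathEdges (l1 ++ x :: l2) = pathEdges l1 ++ (l1.getLast h, x) :: pathEdges (x :: l2)
  | [a], _, x, l2 => by simp [pathEdges_cons_cons, pathEdges]
  | a :: b :: s, _, x, l2 => by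
      have ih := pathEdges_append (b :: s) (by simp) x l2
      simp only [List.cons_append] at ih ⊢
      rw [pathEdges_cons_cons, ih, pathEdges_cons_cons]
      simp [List.getLast]

lemma edgesWeight_append {V : Type*} (w : V → V → ℝ) (E1 E2 : List (V × V)) :
    edgesWeight w (E1 ++ E2) = edgesWeight w E1 + edgesWeight w E2 := by
  simp [edgesWeight]

lemma edgesWeight_nonneg {V : Type*} (w : V → V → ℝ) (hw : ∀ u v, 0 ≤ w u v)
    (E : List (V × V)) : 0 ≤ edgesWeight w E := by
  apply List.sum_nonneg
  intro x hx
  simp only [List.mem_map] at hx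
  obtain ⟨e, -, rfl⟩ := hx
  exact hw _ _

lemma isHamList_of_perm {V : Type*} [Fintype V] {l q : List V} (h : IsHamList l)
    (hpq : q.Perm l) : IsHamList q :=
  ⟨hpq.nodup_iff.2 h.1, fun v => hpq.mem_iff.2 (h.2 v)⟩

lemma isHamList_ne_nil {V : Type*} [Fintype V] [DecidableEq V] {l : List V}
    (h : IsHamList l) (hn : 3 ≤ Fintype.card V) : l ≠ [] := by
  rintro rfl
  obtain ⟨v⟩ := Fintype.card_pos_iff.1 (Nat.lt_of_lt_of_le (by norm_num) hn)
  exact absurd (h.2 v) (by simp)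

lemma isHamList_length {V : Type*} [Fintype V] [DecidableEq V] {l : List V}
    (h : IsHamList l) : l.length = Fintype.card V := by
  have ht : l.toFinset = Finset.univ := Finset.eq_univ_iff_forall.2 (by simpa using h.2)
  rw [← List.toFinset_card_of_nodup h.1, ht, Finset.card_univ]

/-- For n ≥ 3, in a complete weighted graph with nonnegative edge weights, the maximum
Hamiltonian path weight P* and the maximum Hamiltonian cycle weight C* satisfy
(2/3)·C* ≤ P* ≤ C*. -/
theorem stmt_13 {V : Type*} [Fintype V] [DecidableEq V]
    (hn : 3 ≤ Fintype.card V)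
    (w : V → V → ℝ) (hsymm : ∀ u v, w u v = w v u) (hw : ∀ u v, 0 ≤ w u v)
    (p : List V) (hp : IsHamList p)
    (hpmax : ∀ q, IsHamList q → pathWeight w q ≤ pathWeight w p)
    (c : List V) (hc : IsHamList c)
    (hcmax : ∀ c', IsHamList c' → cycleWeight w c' ≤ cycleWeight w c) :
    2 / 3 * cycleWeight w c ≤ pathWeight w p ∧ pathWeight w p ≤ cycleWeight w c := by
  -- upper bound
  have hpne : p ≠ [] := isHamList_ne_nil hp hn
  have hupper : pathWeight w p ≤ cycleWeight w c := by
    have h1 : cycleWeight w p = pathWeight w p + w (p.getLast hpne) (p.head hpne) := by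
      obtain ⟨u, q, rfl⟩ := List.exists_cons_of_ne_nil hpne
      show edgesWeight w (pathEdges ((u :: q) ++ [u])) = _
      rw [pathEdges_append (u :: q) (by simp) u [], edgesWeight_append]
      simp [pathWeight, edgesWeight, pathEdges]
    have := hcmax p hp
    have hnn := hw (p.getLast hpne) (p.head hpne)
    linarith
  refine ⟨?_, hupper⟩
  -- lower bound
  have hclen : 3 ≤ c.length := by rw [isHamList_length hc]; exact hn
  match c, hc, hcmax, hclen with
  | a :: b :: d :: t, hc, hcmax, _ =>
  set L : List V := d :: t with hL
  have hLne : L ≠ [] := by simp [hL]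
  set x := L.getLast hLne with hx
  have hglb : (b :: L).getLast (by simp) = x := List.getLast_cons hLne
  -- cycle weight decomposition
  have hgla : (a :: b :: L).getLast (by simp) = x := by
    rw [List.getLast_cons (by simp : b :: L ≠ []), hglb]
  have hC : cycleWeight w (a :: b :: L) =
      w a b + w b d + pathWeight w L + w x a := by
    show edgesWeight w (pathEdges ((a :: b :: L) ++ a :: [])) = _
    rw [pathEdges_append (a :: b :: L) (by simp) a [], hgla, hL,
      pathEdges_cons_cons, pathEdges_cons_cons]
    simp [edgesWeight, pathWeight, pathEdges]
    ring
  -- the three rotations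
  have hr0 : pathWeight w (a :: b :: L) = w a b + w b d + pathWeight w L := by
    rw [hL, pathWeight, pathEdges_cons_cons, pathEdges_cons_cons]
    simp [edgesWeight, pathWeight]
    ring
  have hr1 : pathWeight w ((b :: L) ++ [a]) = w b d + pathWeight w L + w x a := by
    rw [pathWeight, show ((b :: L) ++ [a] : List V) = (b :: L) ++ a :: [] from rfl,
      pathEdges_append (b :: L) (by simp) a [], hglb, hL, pathEdges_cons_cons]
    simp [edgesWeight, pathWeight, pathEdges]
    ring
  have hr2 : pathWeight w (L ++ [a, b]) = pathWeight w L + w x a + w a b := by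
    rw [pathWeight, show (L ++ [a, b] : List V) = L ++ a :: [b] from rfl,
      pathEdges_append L hLne a [b], ← hx]
    simp [edgesWeight, pathWeight, pathEdges]
    ring
  have hham1 : IsHamList ((b :: L) ++ [a]) :=
    isHamList_of_perm hc (List.perm_append_singleton a (b :: L))
  have hham2 : IsHamList (L ++ [a, b]) :=
    isHamList_of_perm hc (List.perm_append_comm)
  have hb0 := hpmax _ hc
  have hb1 := hpmax _ hham1
  have hb2 := hpmax _ hham2
  have hS : 0 ≤ pathWeight w L := edgesWeight_nonneg w hw _
  rw [hr0] at hb0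
  rw [hr1] at hb1
  rw [hr2] at hb2
  rw [hC]
  linarith
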